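/- Let F, G be m×m complex matrices with det(sF − G) not identically zero, and suppose there exist invertible P, Q with PFQ = diag(I_p, H_q) and PGQ = diag(J_p, I_q), where H_q is nilpotent. Then every sequence (Y_k)_{k≥0} in ℂ^m satisfying F Y_{k+1} = G Y_k for all k ≥ 0 is of the form Y_k = Q_p J_p^k C for some constant C ∈ ℂ^p, where Q = [Q_p Q_q] is the column partition of Q. -/

import Mathlib

/-!
Change variables `Y k = Q *ᵥ Z k`. Multiplying the recurrence by `P` decouples it into the slow
block `Z₁ (k + 1) = J *ᵥ Z₁ k` and the fast block `H *ᵥ Z₂ (k + 1) = Z₂ k`. The slow block gives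
`Z₁ k = J ^ k *ᵥ Z₁ 0`; iterating the fast block gives `Z₂ k = H ^ n *ᵥ Z₂ (k + n)`, which vanishes
once `H ^ n = 0`. Hence `Y k = Q *ᵥ Sum.elim (J ^ k *ᵥ Z₁ 0) 0 = Q_p *ᵥ (J ^ k *ᵥ Z₁ 0)`.
-/

open Matrix

namespace Matrix

variable {n R : Type*} [Semiring R]

section Powers

variable [Fintype n] [DecidableEq n]

theorem eq_pow_mulVec_of_forall_succ_eq_mulVec {A : Matrix n n R} {u : ℕ → n → R}
    (hu : ∀ k, u (k + 1) = A *ᵥ u k) (k : ℕ) : u k = A ^ k *ᵥ u 0 := by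
  induction k with
  | zero => simp
  | succ k ih => rw [hu k, ih, mulVec_mulVec, ← pow_succ']

theorem eq_pow_mulVec_of_forall_mulVec_succ {H : Matrix n n R} {v : ℕ → n → R}
    (hv : ∀ k, H *ᵥ v (k + 1) = v k) (j k : ℕ) : v k = H ^ j *ᵥ v (k + j) := by
  induction j generalizing k with
  | zero => simp
  | succ j ih => rw [ih k, ← hv (k + j), mulVec_mulVec, ← pow_succ, add_assoc]

theorem eq_zero_of_isNilpotent_of_forall_mulVec_succ {H : Matrix n n R} (hH : IsNilpotent H)
    {v : ℕ → n → R} (hv : ∀ k, H *ᵥ v (k + 1) = v k) (k : ℕ) : v k = 0 := by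
  obtain ⟨j, hj⟩ := hH
  rw [eq_pow_mulVec_of_forall_mulVec_succ hv j k, hj, zero_mulVec]

end Powers

theorem mul_mul_mulVec_eq_of_mulVec_mulVec_eq {k m l : Type*} [Fintype n] [Fintype m] [Fintype l]
    (P : Matrix k m R) {F G : Matrix m n R} {Q : Matrix n l R} {x y : l → R}
    (h : F *ᵥ (Q *ᵥ x) = G *ᵥ (Q *ᵥ y)) : (P * F * Q) *ᵥ x = (P * G * Q) *ᵥ y := by
  simp only [← mulVec_mulVec, h]

theorem fromBlocks_zero_zero_mulVec_eq_iff {l m o : Type*} [Fintype l] [Fintype m]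
    {A A' : Matrix o l R} {D D' : Matrix n m R} {x y : l ⊕ m → R} :
    fromBlocks A 0 0 D *ᵥ x = fromBlocks A' 0 0 D' *ᵥ y ↔
      A *ᵥ (x ∘ Sum.inl) = A' *ᵥ (y ∘ Sum.inl) ∧ D *ᵥ (x ∘ Sum.inr) = D' *ᵥ (y ∘ Sum.inr) := by
  simp only [fromBlocks_mulVec, zero_mulVec, add_zero, zero_add, Sum.elim_eq_iff]

theorem mulVec_sumElim_zero {l m : Type*} [Fintype l] [Fintype m] (M : Matrix n (l ⊕ m) R)
    (c : l → R) : M *ᵥ Sum.elim c 0 = M.submatrix id Sum.inl *ᵥ c := by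
  rw [← fromCols_toCols M, fromCols_mulVec_sumElim, mulVec_zero, add_zero]
  rfl

end Matrix

theorem weierstrass_solution_form_general
    (p q : ℕ) (F G P Q : Matrix (Fin p ⊕ Fin q) (Fin p ⊕ Fin q) ℂ)
    (hQ : IsUnit Q.det)
    (J : Matrix (Fin p) (Fin p) ℂ) (H : Matrix (Fin q) (Fin q) ℂ)
    (hH : IsNilpotent H)
    (hF : P * F * Q = Matrix.fromBlocks 1 0 0 H)
    (hG : P * G * Q = Matrix.fromBlocks J 0 0 1)
    (Y : ℕ → Fin p ⊕ Fin q → ℂ)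
    (hY : ∀ k : ℕ, F.mulVec (Y (k + 1)) = G.mulVec (Y k)) :
    ∃ C : Fin p → ℂ, ∀ k : ℕ,
      Y k = (Q.submatrix id (Sum.inl : Fin p → Fin p ⊕ Fin q) * J ^ k).mulVec C := by
  set Z : ℕ → Fin p ⊕ Fin q → ℂ := fun k => Q⁻¹ *ᵥ Y k
  have hQZ (k : ℕ) : Q *ᵥ Z k = Y k := by simp [Z, mulVec_mulVec, mul_nonsing_inv Q hQ]
  have hblocks (k : ℕ) : Z (k + 1) ∘ Sum.inl = J *ᵥ (Z k ∘ Sum.inl) ∧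
      H *ᵥ (Z (k + 1) ∘ Sum.inr) = Z k ∘ Sum.inr := by
    have h := mul_mul_mulVec_eq_of_mulVec_mulVec_eq P (x := Z (k + 1)) (y := Z k)
      (by rw [hQZ, hQZ, hY])
    rwa [hF, hG, fromBlocks_zero_zero_mulVec_eq_iff, one_mulVec, one_mulVec] at h
  have hslow (k : ℕ) : Z k ∘ Sum.inl = J ^ k *ᵥ (Z 0 ∘ Sum.inl) :=
    eq_pow_mulVec_of_forall_succ_eq_mulVec (u := fun k => Z k ∘ Sum.inl) (fun k => (hblocks k).1) k
  have hfast (k : ℕ) : Z k ∘ Sum.inr = 0 :=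
    eq_zero_of_isNilpotent_of_forall_mulVec_succ hH (v := fun k => Z k ∘ Sum.inr)
      (fun k => (hblocks k).2) k
  refine ⟨Z 0 ∘ Sum.inl, fun k => ?_⟩
  rw [← hQZ k, ← Sum.elim_comp_inl_inr (Z k), hslow k, hfast k, mulVec_sumElim_zero,
    mulVec_mulVec]

theorem weierstrass_solution_form
    (p q : ℕ) (F G P Q : Matrix (Fin p ⊕ Fin q) (Fin p ⊕ Fin q) ℂ)
    (hreg : ∃ s : ℂ, (s • F - G).det ≠ 0)
    (hP : IsUnit P.det) (hQ : IsUnit Q.det)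
    (J : Matrix (Fin p) (Fin p) ℂ) (H : Matrix (Fin q) (Fin q) ℂ)
    (hH : IsNilpotent H)
    (hF : P * F * Q = Matrix.fromBlocks 1 0 0 H)
    (hG : P * G * Q = Matrix.fromBlocks J 0 0 1)
    (Y : ℕ → Fin p ⊕ Fin q → ℂ)
    (hY : ∀ k : ℕ, F.mulVec (Y (k + 1)) = G.mulVec (Y k)) :
    ∃ C : Fin p → ℂ, ∀ k : ℕ,
      Y k = (Q.submatrix id (Sum.inl : Fin p → Fin p ⊕ Fin q) * J ^ k).mulVec C :=
  weierstrass_solution_form_general p q F G P Q hQ J H hH hF hG Y hY
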